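/- Fix a real q > 1 and natural numbers m, n with n ≥ m + 2. Let f, g : ℕ → ℝ. If Σ_{k=m+1}^{n} (q^k − q^{k−1})·( f(k)·η(k−1) + g(k)·(Dη)(k) ) = 0 for every function η : ℕ → ℝ with η(m) = η(n) = 0, then (Dg)(k) = f(k) for all k with m + 2 ≤ k ≤ n. -/

import Mathlib

/-- The nabla derivative on the time scale `q^ℕ₀` (encoded by indices `k ∈ ℕ`):
`(Df)(k) = (f(k) − f(k−1)) / (q^k − q^{k−1})`. -/
noncomputable def qNabla (q : ℝ) (f : ℕ → ℝ) : ℕ → ℝ :=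
  fun k => (f k - f (k - 1)) / (q ^ k - q ^ (k - 1))

/-! Testing the variational identity against the bump `η = Pi.single i 1` with `m < i < n`
isolates the two summands `k = i` and `k = i + 1`; after cancelling the weight
`q^k − q^{k−1}` against the denominator of `Dη`, the identity reads
`g i − g (i+1) + (q^{i+1} − q^i) f (i+1) = 0`, which is `(Dg)(i+1) = f (i+1)`. -/

open Finset

lemma pow_sub_pow_pred_ne_zero {q : ℝ} (hq : 1 < q) {k : ℕ} (hk : k ≠ 0) :
    q ^ k - q ^ (k - 1) ≠ 0 :=
  sub_ne_zero.2 (pow_lt_pow_right₀ hq (Nat.sub_one_lt hk)).ne'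

lemma mul_qNabla {q : ℝ} {k : ℕ} (hk : q ^ k - q ^ (k - 1) ≠ 0) (η : ℕ → ℝ) :
    (q ^ k - q ^ (k - 1)) * qNabla q η k = η k - η (k - 1) :=
  mul_div_cancel₀ _ hk

lemma sum_variation_eq {q : ℝ} (hq : 1 < q) (m n : ℕ) (f g η : ℕ → ℝ) :
    ∑ k ∈ Icc (m + 1) n, (q ^ k - q ^ (k - 1)) * (f k * η (k - 1) + g k * qNabla q η k) =
      ∑ k ∈ Icc (m + 1) n,
        ((q ^ k - q ^ (k - 1)) * f k * η (k - 1) + g k * (η k - η (k - 1))) := by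
  refine sum_congr rfl fun k hk => ?_
  have hk0 : k ≠ 0 := by simp only [mem_Icc] at hk; omega
  rw [← mul_qNabla (pow_sub_pow_pred_ne_zero hq hk0) η]
  ring

lemma sum_variation_single {q : ℝ} (hq : 1 < q) {m n i : ℕ} (hmi : m < i) (hin : i < n)
    (f g : ℕ → ℝ) :
    ∑ k ∈ Icc (m + 1) n, (q ^ k - q ^ (k - 1)) *
        (f k * (Pi.single i 1 : ℕ → ℝ) (k - 1) + g k * qNabla q (Pi.single i 1) k) =
      g i - g (i + 1) + (q ^ (i + 1) - q ^ i) * f (i + 1) := by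
  rw [sum_variation_eq hq,
    sum_eq_add_of_mem i (i + 1) (by simp; omega) (by simp; omega) (by omega)]
  · simp only [Nat.add_sub_cancel, Pi.single_eq_same,
      Pi.single_eq_of_ne (show i - 1 ≠ i by omega), Pi.single_eq_of_ne (show i + 1 ≠ i by omega)]
    ring
  · rintro k - ⟨hki, hki1⟩
    simp [hki, show k - 1 ≠ i by omega]

theorem fundamental_lemma_duBoisReymond_qscale_general (q : ℝ) (hq : 1 < q) (m n : ℕ)
    (f g : ℕ → ℝ)
    (h : ∀ η : ℕ → ℝ, η m = 0 → η n = 0 →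
      ∑ k ∈ Finset.Icc (m + 1) n,
        (q ^ k - q ^ (k - 1)) * (f k * η (k - 1) + g k * qNabla q η k) = 0) :
    ∀ k : ℕ, m + 2 ≤ k → k ≤ n → qNabla q g k = f k := by
  intro k hmk hkn
  obtain ⟨i, rfl⟩ : ∃ i, k = i + 1 := ⟨k - 1, by omega⟩
  have hvar := h (Pi.single i 1) (Pi.single_eq_of_ne (by omega) 1)
    (Pi.single_eq_of_ne (by omega) 1)
  rw [sum_variation_single hq (by omega) (by omega)] at hvar
  rw [qNabla, div_eq_iff (pow_sub_pow_pred_ne_zero hq i.add_one_ne_zero), Nat.add_sub_cancel]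
  linarith

/-- du Bois-Reymond fundamental lemma of the nabla calculus of variations on the
q-scale: if `Σ_{k=m+1}^{n} (q^k − q^{k−1})·( f(k)·η(k−1) + g(k)·(Dη)(k) ) = 0` for
every `η : ℕ → ℝ` with `η(m) = η(n) = 0`, then `(Dg)(k) = f(k)` for `m+2 ≤ k ≤ n`. -/
theorem fundamental_lemma_duBoisReymond_qscale (q : ℝ) (hq : 1 < q) (m n : ℕ)
    (hmn : m + 2 ≤ n) (f g : ℕ → ℝ)
    (h : ∀ η : ℕ → ℝ, η m = 0 → η n = 0 →
      ∑ k ∈ Finset.Icc (m + 1) n,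
        (q ^ k - q ^ (k - 1)) * (f k * η (k - 1) + g k * qNabla q η k) = 0) :
    ∀ k : ℕ, m + 2 ≤ k → k ≤ n → qNabla q g k = f k :=
  fundamental_lemma_duBoisReymond_qscale_general q hq m n f g h
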